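/- Let p be a complex polynomial of degree d ≥ 1 with all roots in the closed unit disk, and let z ∈ ℂ with |z| > 1. Then |p'(z)/p(z)| ≥ d/(|z| + 1) > 0; in particular p'(z) ≠ 0 and the Newton step satisfies |z - N_p(z)| ≤ (|z| + 1)/d. -/

import Mathlib

open Polynomial

/-! Each root `ξ` contributes `1 / (z - ξ)` to `p'(z) / p(z)`. After rotating `z` onto the positive
real axis, every such term has real part at least `1 / (‖z‖ + 1)` because `‖ξ‖ ≤ 1`; so the real
part of the rotated sum, and hence `‖p'(z) / p(z)‖`, is at least `d / (‖z‖ + 1)`. -/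

lemma one_div_add_one_le_re_one_div_sub {a : ℝ} (ha : 1 < a) {w : ℂ} (hw : ‖w‖ ≤ 1) :
    1 / (a + 1) ≤ (1 / ((a : ℂ) - w)).re := by
  have hw_sq : w.re ^ 2 + w.im ^ 2 ≤ 1 := by
    nlinarith [Complex.sq_norm w, Complex.normSq_apply w, norm_nonneg w]
  have hre : w.re ≤ 1 := (Complex.re_le_norm w).trans hw
  have hre' : -1 ≤ w.re := by linarith [neg_abs_le w.re, Complex.abs_re_le_norm w]
  rw [one_div ((a : ℂ) - w), Complex.inv_re, Complex.normSq_apply]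
  simp only [Complex.sub_re, Complex.ofReal_re, Complex.sub_im, Complex.ofReal_im, zero_sub,
    mul_neg, neg_mul, neg_neg]
  rw [div_le_div_iff₀ (by linarith) (by nlinarith)]
  -- `(a - x)(a + 1) - |a - w|² ≥ (a - 1)(1 + x)` with `x = re w`
  nlinarith [mul_nonneg (sub_nonneg.2 ha.le) (neg_le_iff_add_nonneg'.1 hre')]

lemma card_div_norm_add_one_le_norm_sum_one_div_sub {t : Multiset ℂ} (ht : ∀ ξ ∈ t, ‖ξ‖ ≤ 1)
    {z : ℂ} (hz : 1 < ‖z‖) :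
    t.card / (‖z‖ + 1) ≤ ‖(t.map fun ξ => 1 / (z - ξ)).sum‖ := by
  have hz0 : z ≠ 0 := norm_pos_iff.1 (by linarith)
  -- the rotation `v` carries `z` onto the positive real axis
  set v : ℂ := ‖z‖ / z
  have hv : ‖v⁻¹‖ = 1 := by simp [v, hz0]
  have hvz : v * z = ‖z‖ := div_mul_cancel₀ _ hz0
  have hrot : ∀ ξ, v⁻¹ * (1 / (z - ξ)) = 1 / ((‖z‖ : ℂ) - v * ξ) := fun ξ => by
    rw [one_div, one_div, ← mul_inv, ← hvz, mul_sub]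
  calc (t.card : ℝ) / (‖z‖ + 1) = t.card • (1 / (‖z‖ + 1)) := by rw [nsmul_eq_mul, mul_one_div]
    _ ≤ (t.map fun ξ => (1 / ((‖z‖ : ℂ) - v * ξ)).re).sum := by
        refine Multiset.card_nsmul_le_sum ?_ |>.trans_eq' (by rw [Multiset.card_map])
        simp only [Multiset.mem_map]
        rintro _ ⟨ξ, hξ, rfl⟩
        exact one_div_add_one_le_re_one_div_sub hz (by simpa [v, hz0] using ht ξ hξ)
    _ = (v⁻¹ * (t.map fun ξ => 1 / (z - ξ)).sum).re := by
        rw [← Multiset.sum_map_mul_left, Multiset.map_congr rfl fun ξ _ => hrot ξ]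
        simpa [Multiset.map_map] using
          (map_multiset_sum Complex.reAddGroupHom (t.map fun ξ => 1 / ((‖z‖ : ℂ) - v * ξ))).symm
    _ ≤ ‖(t.map fun ξ => 1 / (z - ξ)).sum‖ := by
        simpa [hv] using Complex.re_le_norm (v⁻¹ * (t.map fun ξ => 1 / (z - ξ)).sum)

lemma natDegree_div_norm_add_one_le_norm_eval_derivative_div_eval {p : ℂ[X]}
    (hroots : ∀ ξ ∈ p.roots, ‖ξ‖ ≤ 1) {z : ℂ} (hz : 1 < ‖z‖) :
    p.natDegree / (‖z‖ + 1) ≤ ‖p.derivative.eval z / p.eval z‖ := by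
  rcases eq_or_ne p 0 with rfl | hp0
  · simp
  have hpz : p.eval z ≠ 0 := fun h => by linarith [hroots z ((mem_roots hp0).2 h)]
  have hp := IsAlgClosed.splits p
  rw [hp.eval_derivative_div_eval_of_ne_zero hpz, hp.natDegree_eq_card_roots]
  exact card_div_norm_add_one_le_norm_sum_one_div_sub hroots hz

theorem newton_step_bound_outside_disk
    (p : Polynomial ℂ) (d : ℕ) (z : ℂ)
    (hd : p.natDegree = d) (hd1 : 1 ≤ d)
    (hroots : ∀ ξ ∈ p.roots, ‖ξ‖ ≤ 1)
    (hz : 1 < ‖z‖)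
    (N : ℂ → ℂ) (hN : N = fun w => w - p.eval w / p.derivative.eval w) :
    (d : ℝ) / (‖z‖ + 1) ≤ ‖p.derivative.eval z / p.eval z‖ ∧
    p.derivative.eval z ≠ 0 ∧
    ‖z - N z‖ ≤ (‖z‖ + 1) / d := by
  have hbound := hd ▸ natDegree_div_norm_add_one_le_norm_eval_derivative_div_eval hroots hz
  have hpos : (0 : ℝ) < d / (‖z‖ + 1) := div_pos (by exact_mod_cast hd1) (by positivity)
  have hderiv : p.derivative.eval z ≠ 0 := fun h => by
    rw [h, zero_div, norm_zero] at hbound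
    linarith
  refine ⟨hbound, hderiv, ?_⟩
  calc ‖z - N z‖ = ‖p.derivative.eval z / p.eval z‖⁻¹ := by
        rw [hN, sub_sub_cancel, ← norm_inv, inv_div]
    _ ≤ (d / (‖z‖ + 1))⁻¹ := inv_anti₀ hpos hbound
    _ = (‖z‖ + 1) / d := inv_div _ _
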